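/- Let Ω = Δ ∪ (π − Δ), z₀ = π/2 + iπ/2, z₁ = π/2 − iπ/2. For ANY pair of functions χ₁, χ₂ ∈ C^∞(Ω) satisfying 0 ≤ χᵢ ≤ 1, supp χ₁ ⊆ Δ, supp χ₂ ⊆ π − Δ, and χ₁ + χ₂ ≡ 1 on Ω, one has limsup_{z → zᵢ, z ∈ D} |(z − zᵢ) · (∂χ₁/∂z̄)(z)| > 0 for i = 0, 1, where ∂/∂z̄ = (1/2)(∂/∂x + i ∂/∂y). In particular the estimate |∂χ₁/∂z̄| ≤ C/(|z − z₀||z − z₁|) on D is optimal. -/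

import Mathlib

open MeasureTheory Set

noncomputable section

/-- The open sector `Δ = {z : |arg z| < π/4}`. -/
def SectorDelta : Set ℂ := {z : ℂ | 0 < z.re ∧ |z.im| < z.re}

/-- The reflected sector `π − Δ`. -/
def SectorPiDelta : Set ℂ := (fun z => (Real.pi : ℂ) - z) '' SectorDelta

/-- The open square `D = Δ ∩ (π − Δ)` with vertices `0, π/2 − iπ/2, π, π/2 + iπ/2`. -/
def SquareD : Set ℂ := SectorDelta ∩ SectorPiDelta

/-- Membership in the Bergman space `A²(Ω)`. -/
def MemA2 (Ω : Set ℂ) (f : ℂ → ℂ) : Prop :=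
  DifferentiableOn ℂ f Ω ∧ ∫⁻ z in Ω, ENNReal.ofReal (‖f z‖ ^ 2) < ⊤

/-- Membership in the weighted Bergman space `A²(Ω, w)`. -/
def MemA2W (Ω : Set ℂ) (w : ℂ → ℝ) (f : ℂ → ℂ) : Prop :=
  DifferentiableOn ℂ f Ω ∧ ∫⁻ z in Ω, ENNReal.ofReal (‖f z‖ ^ 2 * w z) < ⊤

/-- `log⁺ t = max (log t) 0`. -/
def logPlus (t : ℝ) : ℝ := Real.log (max t 1)

/-- Starting vertices of the four sides of `∂D`, counterclockwise. -/
def sideStart : Fin 4 → ℂ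
  | 0 => 0
  | 1 => ((Real.pi / 2 : ℝ) : ℂ) * (1 - Complex.I)
  | 2 => ((Real.pi : ℝ) : ℂ)
  | 3 => ((Real.pi / 2 : ℝ) : ℂ) * (1 + Complex.I)

/-- Direction vectors of the four sides of `∂D`, counterclockwise. -/
def sideDir : Fin 4 → ℂ
  | 0 => ((Real.pi / 2 : ℝ) : ℂ) * (1 - Complex.I)
  | 1 => ((Real.pi / 2 : ℝ) : ℂ) * (1 + Complex.I)
  | 2 => ((Real.pi / 2 : ℝ) : ℂ) * (Complex.I - 1)
  | 3 => -(((Real.pi / 2 : ℝ) : ℂ) * (1 + Complex.I))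

/-- Parametrization of the `k`-th side of `∂D`. -/
def sidePath (k : Fin 4) (t : ℝ) : ℂ := sideStart k + (t : ℂ) * sideDir k

/-- `g` is arclength-integrable on `∂D` (each side has constant speed). -/
def BoundaryIntegrable (g : ℂ → ℂ) : Prop :=
  ∀ k : Fin 4, IntervalIntegrable (fun t => ‖g (sidePath k t)‖) volume 0 1

/-- `∫_{∂D} |g| log⁺|g| |du| < ∞` (each side has constant speed). -/
def BoundaryLlogL (g : ℂ → ℂ) : Prop :=
  ∀ k : Fin 4, IntervalIntegrable
    (fun t => ‖g (sidePath k t)‖ * logPlus ‖g (sidePath k t)‖) volume 0 1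

/-- The Cauchy integral `(1/(2πi)) ∮_{∂D} g(u)/(u − z) du`, `∂D` counterclockwise. -/
def cauchyD (g : ℂ → ℂ) (z : ℂ) : ℂ :=
  (2 * (Real.pi : ℂ) * Complex.I)⁻¹ *
    ∑ k : Fin 4, ∫ t in (0:ℝ)..1, g (sidePath k t) * sideDir k / (sidePath k t - z)

/-- The Cauchy transform `(𝒞g)(z) = (1/(iπ)) ∫_ℝ g(t)/(t − z) dt` on the upper half-plane. -/
def cauchyTransform (g : ℝ → ℂ) (z : ℂ) : ℂ :=
  (Complex.I * (Real.pi : ℂ))⁻¹ * ∫ t : ℝ, g t / ((t : ℂ) - z)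


/-- The Wirtinger derivative `∂χ/∂z̄ = (1/2)(∂χ/∂x + i ∂χ/∂y)` of a real-valued
function on `ℂ ≃ ℝ²`. -/
def wirtingerBar (χ : ℂ → ℝ) (z : ℂ) : ℂ :=
  (1 / 2 : ℂ) * (((fderiv ℝ χ z 1 : ℝ) : ℂ) + Complex.I * ((fderiv ℝ χ z Complex.I : ℝ) : ℂ))



lemma mem_sectorPiDelta_iff (z : ℂ) : z ∈ SectorPiDelta ↔ ((Real.pi : ℂ) - z) ∈ SectorDelta := by
  constructor
  · rintro ⟨w, hw, rfl⟩; simpa using hw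
  · intro h; exact ⟨_, h, by ring⟩

lemma isOpen_sectorDelta : IsOpen SectorDelta := by
  have : SectorDelta = Complex.re ⁻¹' (Ioi 0) ∩ {z | |z.im| < z.re} := rfl
  rw [this]
  exact (isOpen_Ioi.preimage Complex.continuous_re).inter
    (isOpen_lt (continuous_abs.comp Complex.continuous_im) Complex.continuous_re)

lemma isOpen_sectorPiDelta : IsOpen SectorPiDelta := by
  have : SectorPiDelta = (fun z => (Real.pi : ℂ) - z) ⁻¹' SectorDelta := by
    ext z; rw [mem_preimage, mem_sectorPiDelta_iff]
  rw [this]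
  exact isOpen_sectorDelta.preimage (continuous_const.sub continuous_id)

lemma isOpen_Omega : IsOpen (SectorDelta ∪ SectorPiDelta) :=
  isOpen_sectorDelta.union isOpen_sectorPiDelta

lemma abs_fderiv_le (χ : ℂ → ℝ) (z v : ℂ) :
    |fderiv ℝ χ z v| ≤ 2 * ‖wirtingerBar χ z‖ * ‖v‖ := by
  set L := fderiv ℝ χ z with hL
  set a := L 1 with ha
  set b := L Complex.I with hb
  have hLv : L v = v.re * a + v.im * b := by
    have hv : v = v.re • (1 : ℂ) + v.im • Complex.I := by
      simp [Complex.real_smul, Complex.re_add_im]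
    calc L v = L (v.re • (1 : ℂ) + v.im • Complex.I) := by rw [← hv]
      _ = v.re • L 1 + v.im • L Complex.I := by rw [map_add, _root_.map_smul, _root_.map_smul]
      _ = v.re * a + v.im * b := by simp [smul_eq_mul]; rfl
  have hw : ‖wirtingerBar χ z‖ = (1 / 2) * Real.sqrt (a ^ 2 + b ^ 2) := by
    unfold wirtingerBar
    rw [norm_mul]
    have h1 : ‖(1 / 2 : ℂ)‖ = 1 / 2 := by norm_num
    rw [h1]
    congr 1
    rw [Complex.norm_def, Complex.normSq_apply]
    congr 1
    simp [← hL, ← ha, ← hb, Complex.add_re, Complex.add_im, Complex.mul_re, Complex.mul_im]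
    ring
  have hnv : ‖v‖ = Real.sqrt (v.re ^ 2 + v.im ^ 2) := by
    rw [Complex.norm_def, Complex.normSq_apply]; ring_nf
  have key : |v.re * a + v.im * b| ≤ Real.sqrt (a ^ 2 + b ^ 2) * ‖v‖ := by
    rw [hnv, ← Real.sqrt_mul (by positivity), ← Real.sqrt_sq_eq_abs]
    apply Real.sqrt_le_sqrt
    nlinarith [sq_nonneg (a * v.im - b * v.re)]
  rw [hL] at hLv ⊢
  rw [hLv, hw]
  calc |v.re * a + v.im * b| ≤ Real.sqrt (a ^ 2 + b ^ 2) * ‖v‖ := key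
    _ = 2 * (1 / 2 * Real.sqrt (a ^ 2 + b ^ 2)) * ‖v‖ := by ring

lemma mem_sectorDelta_iff (z : ℂ) : z ∈ SectorDelta ↔ 0 < z.re ∧ |z.im| < z.re := Iff.rfl

lemma mem_sectorPiDelta_iff' (z : ℂ) :
    z ∈ SectorPiDelta ↔ z.re < Real.pi ∧ |z.im| < Real.pi - z.re := by
  rw [mem_sectorPiDelta_iff, mem_sectorDelta_iff]
  have h1 : ((Real.pi : ℂ) - z).re = Real.pi - z.re := by simp
  have h2 : ((Real.pi : ℂ) - z).im = -z.im := by simp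
  rw [h1, h2, abs_neg]
  constructor <;> (rintro ⟨u, v⟩; exact ⟨by linarith, v⟩)

lemma trigA (φ : ℝ) (h1 : -(Real.pi / 4) < φ) (h2 : φ < Real.pi / 4) :
    0 < Real.cos φ + Real.sin φ := by
  have hπ := Real.pi_pos
  have hs : 0 < Real.sin (φ + Real.pi / 4) :=
    Real.sin_pos_of_pos_of_lt_pi (by linarith) (by linarith)
  rw [Real.sin_add, Real.sin_pi_div_four, Real.cos_pi_div_four] at hs
  have s2 : 0 < Real.sqrt 2 := by positivity
  nlinarith
lemma trigB (φ : ℝ) (h1 : -(Real.pi / 4) < φ) (h2 : φ < Real.pi / 4) :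
    0 < Real.cos φ - Real.sin φ := by
  have := trigA (-φ) (by linarith) (by linarith)
  rw [Real.cos_neg, Real.sin_neg] at this
  linarith

lemma point_re (c : ℂ) (r θ : ℝ) :
    (c + (r : ℂ) * Complex.exp ((θ : ℂ) * Complex.I)).re = c.re + r * Real.cos θ := by
  simp [Complex.exp_ofReal_mul_I_re, Complex.exp_ofReal_mul_I_im]
lemma point_im (c : ℂ) (r θ : ℝ) :
    (c + (r : ℂ) * Complex.exp ((θ : ℂ) * Complex.I)).im = c.im + r * Real.sin θ := by
  simp [Complex.exp_ofReal_mul_I_re, Complex.exp_ofReal_mul_I_im]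

-- specific angle values
lemma cos_3pi2 : Real.cos (3 * Real.pi / 2) = 0 := by
  have : 3 * Real.pi / 2 = Real.pi + Real.pi / 2 := by ring
  rw [this, Real.cos_add]; simp
lemma sin_3pi2 : Real.sin (3 * Real.pi / 2) = -1 := by
  have : 3 * Real.pi / 2 = Real.pi + Real.pi / 2 := by ring
  rw [this, Real.sin_add]; simp
lemma cos_shift (φ : ℝ) : Real.cos (3 * Real.pi / 2 + φ) = Real.sin φ := by
  rw [Real.cos_add, cos_3pi2, sin_3pi2]; ring
lemma sin_shift (φ : ℝ) : Real.sin (3 * Real.pi / 2 + φ) = -Real.cos φ := by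
  rw [Real.sin_add, cos_3pi2, sin_3pi2]; ring
lemma cos_shift' (φ : ℝ) : Real.cos (Real.pi / 2 + φ) = -Real.sin φ := by
  rw [Real.cos_add]; simp
lemma sin_shift' (φ : ℝ) : Real.sin (Real.pi / 2 + φ) = Real.cos φ := by
  rw [Real.sin_add]; simp

lemma memD0 (r θ : ℝ) (hr : r ∈ Ioo 0 (Real.pi / 2))
    (hθ : θ ∈ Ioo (5 * Real.pi / 4) (7 * Real.pi / 4)) :
    ((Real.pi / 2 : ℝ) : ℂ) + ((Real.pi / 2 : ℝ) : ℂ) * Complex.I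
      + (r : ℂ) * Complex.exp ((θ : ℂ) * Complex.I) ∈ SquareD := by
  have hπ := Real.pi_pos
  set c : ℂ := ((Real.pi / 2 : ℝ) : ℂ) + ((Real.pi / 2 : ℝ) : ℂ) * Complex.I with hc
  set z := c + (r : ℂ) * Complex.exp ((θ : ℂ) * Complex.I) with hz
  have hcre : c.re = Real.pi / 2 := by simp [hc]
  have hcim : c.im = Real.pi / 2 := by simp [hc]
  set φ := θ - 3 * Real.pi / 2 with hφ
  have hθφ : θ = 3 * Real.pi / 2 + φ := by rw [hφ]; ring
  have hφ1 : -(Real.pi / 4) < φ := by rw [hφ]; obtain ⟨h, _⟩ := hθ; linarith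
  have hφ2 : φ < Real.pi / 4 := by rw [hφ]; obtain ⟨_, h⟩ := hθ; linarith
  have hre : z.re = Real.pi / 2 + r * Real.sin φ := by
    rw [hz, point_re, hcre, hθφ, cos_shift]
  have him : z.im = Real.pi / 2 - r * Real.cos φ := by
    rw [hz, point_im, hcim, hθφ, sin_shift]; ring
  have hA := trigA φ hφ1 hφ2
  have hB := trigB φ hφ1 hφ2
  have hc1 := Real.cos_le_one φ
  have hc2 := Real.neg_one_le_cos φ
  have hs1 := Real.sin_le_one φ
  have hs2 := Real.neg_one_le_sin φ
  obtain ⟨hr0, hr1⟩ := hr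
  constructor
  · refine ⟨by rw [hre]; nlinarith, ?_⟩
    rw [hre, him, abs_lt]
    constructor <;> nlinarith
  · rw [mem_sectorPiDelta_iff']
    refine ⟨by rw [hre]; nlinarith, ?_⟩
    rw [hre, him, abs_lt]
    constructor <;> nlinarith

lemma memD1 (r θ : ℝ) (hr : r ∈ Ioo 0 (Real.pi / 2))
    (hθ : θ ∈ Ioo (Real.pi / 4) (3 * Real.pi / 4)) :
    ((Real.pi / 2 : ℝ) : ℂ) - ((Real.pi / 2 : ℝ) : ℂ) * Complex.I
      + (r : ℂ) * Complex.exp ((θ : ℂ) * Complex.I) ∈ SquareD := by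
  have hπ := Real.pi_pos
  set c : ℂ := ((Real.pi / 2 : ℝ) : ℂ) - ((Real.pi / 2 : ℝ) : ℂ) * Complex.I with hc
  set z := c + (r : ℂ) * Complex.exp ((θ : ℂ) * Complex.I) with hz
  have hcre : c.re = Real.pi / 2 := by simp [hc]
  have hcim : c.im = -(Real.pi / 2) := by simp [hc]
  set φ := θ - Real.pi / 2 with hφ
  have hθφ : θ = Real.pi / 2 + φ := by rw [hφ]; ring
  have hφ1 : -(Real.pi / 4) < φ := by rw [hφ]; obtain ⟨h, _⟩ := hθ; linarith
  have hφ2 : φ < Real.pi / 4 := by rw [hφ]; obtain ⟨_, h⟩ := hθ; linarith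
  have hre : z.re = Real.pi / 2 - r * Real.sin φ := by
    rw [hz, point_re, hcre, hθφ, cos_shift']; ring
  have him : z.im = -(Real.pi / 2) + r * Real.cos φ := by
    rw [hz, point_im, hcim, hθφ, sin_shift']
  have hA := trigA φ hφ1 hφ2
  have hB := trigB φ hφ1 hφ2
  have hc1 := Real.cos_le_one φ
  have hc2 := Real.neg_one_le_cos φ
  have hs1 := Real.sin_le_one φ
  have hs2 := Real.neg_one_le_sin φ
  obtain ⟨hr0, hr1⟩ := hr
  constructor
  · refine ⟨by rw [hre]; nlinarith, ?_⟩
    rw [hre, him, abs_lt]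
    constructor <;> nlinarith
  · rw [mem_sectorPiDelta_iff']
    refine ⟨by rw [hre]; nlinarith, ?_⟩
    rw [hre, him, abs_lt]
    constructor <;> nlinarith

lemma typeA (z : ℂ) (x : ℝ) (h0 : 0 < x) (hx : x < Real.pi / 2)
    (hre : z.re = x) (him : z.im = x ∨ z.im = -x) :
    z ∈ SectorPiDelta ∧ z ∉ SectorDelta := by
  have hπ := Real.pi_pos
  have habs : |z.im| = x := by rcases him with h | h <;> rw [h] <;> simp [abs_of_pos h0, abs_of_pos, h0.le]
  constructor
  · rw [mem_sectorPiDelta_iff']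
    rw [habs, hre]
    constructor <;> linarith
  · rw [mem_sectorDelta_iff]
    rintro ⟨-, h⟩
    rw [habs, hre] at h
    exact lt_irrefl _ h

lemma typeB (z : ℂ) (x : ℝ) (h0 : 0 < x) (hx : x < Real.pi / 2)
    (hre : z.re = Real.pi - x) (him : z.im = x ∨ z.im = -x) :
    z ∈ SectorDelta ∧ z ∉ SectorPiDelta := by
  have hπ := Real.pi_pos
  have habs : |z.im| = x := by rcases him with h | h <;> rw [h] <;> simp [abs_of_pos h0, abs_of_pos, h0.le]
  constructor
  · rw [mem_sectorDelta_iff, habs, hre]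
    constructor <;> linarith
  · rw [mem_sectorPiDelta_iff']
    rintro ⟨-, h⟩
    rw [habs, hre] at h
    linarith

lemma sqrt2_lt_two : Real.sqrt 2 < 2 := by
  nlinarith [Real.sq_sqrt (show (0:ℝ) ≤ 2 by norm_num), Real.sqrt_nonneg 2]
lemma sqrt2_pos : (0:ℝ) < Real.sqrt 2 := by positivity

-- endpoint coordinates
lemma cos_5pi4 : Real.cos (5 * Real.pi / 4) = -(Real.sqrt 2 / 2) := by
  have h : 5 * Real.pi / 4 = 3 * Real.pi / 2 + -(Real.pi / 4) := by ring
  rw [h, cos_shift, Real.sin_neg, Real.sin_pi_div_four]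
lemma sin_5pi4 : Real.sin (5 * Real.pi / 4) = -(Real.sqrt 2 / 2) := by
  have h : 5 * Real.pi / 4 = 3 * Real.pi / 2 + -(Real.pi / 4) := by ring
  rw [h, sin_shift, Real.cos_neg, Real.cos_pi_div_four]
lemma cos_7pi4 : Real.cos (7 * Real.pi / 4) = Real.sqrt 2 / 2 := by
  have h : 7 * Real.pi / 4 = 3 * Real.pi / 2 + Real.pi / 4 := by ring
  rw [h, cos_shift, Real.sin_pi_div_four]
lemma sin_7pi4 : Real.sin (7 * Real.pi / 4) = -(Real.sqrt 2 / 2) := by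
  have h : 7 * Real.pi / 4 = 3 * Real.pi / 2 + Real.pi / 4 := by ring
  rw [h, sin_shift, Real.cos_pi_div_four]
lemma cos_3pi4 : Real.cos (3 * Real.pi / 4) = -(Real.sqrt 2 / 2) := by
  have h : 3 * Real.pi / 4 = Real.pi / 2 + Real.pi / 4 := by ring
  rw [h, cos_shift', Real.sin_pi_div_four]
lemma sin_3pi4 : Real.sin (3 * Real.pi / 4) = Real.sqrt 2 / 2 := by
  have h : 3 * Real.pi / 4 = Real.pi / 2 + Real.pi / 4 := by ring
  rw [h, sin_shift', Real.cos_pi_div_four]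

lemma xfacts (r : ℝ) (hr : r ∈ Ioo 0 (Real.pi / 2)) :
    0 < Real.pi / 2 - r * (Real.sqrt 2 / 2) ∧ Real.pi / 2 - r * (Real.sqrt 2 / 2) < Real.pi / 2 := by
  obtain ⟨h0, h1⟩ := hr
  have := sqrt2_lt_two; have := sqrt2_pos
  constructor <;> nlinarith

lemma end0a (r : ℝ) (hr : r ∈ Ioo 0 (Real.pi / 2)) :
    (((Real.pi / 2 : ℝ) : ℂ) + ((Real.pi / 2 : ℝ) : ℂ) * Complex.I
      + (r : ℂ) * Complex.exp (((5 * Real.pi / 4 : ℝ) : ℂ) * Complex.I)) ∈ SectorPiDelta ∧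
    (((Real.pi / 2 : ℝ) : ℂ) + ((Real.pi / 2 : ℝ) : ℂ) * Complex.I
      + (r : ℂ) * Complex.exp (((5 * Real.pi / 4 : ℝ) : ℂ) * Complex.I)) ∉ SectorDelta := by
  obtain ⟨hx0, hx1⟩ := xfacts r hr
  apply typeA _ (Real.pi / 2 - r * (Real.sqrt 2 / 2)) hx0 hx1
  · rw [point_re, cos_5pi4]; simp; ring
  · left; rw [point_im, sin_5pi4]; simp; ring

lemma end0b (r : ℝ) (hr : r ∈ Ioo 0 (Real.pi / 2)) :
    (((Real.pi / 2 : ℝ) : ℂ) + ((Real.pi / 2 : ℝ) : ℂ) * Complex.I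
      + (r : ℂ) * Complex.exp (((7 * Real.pi / 4 : ℝ) : ℂ) * Complex.I)) ∈ SectorDelta ∧
    (((Real.pi / 2 : ℝ) : ℂ) + ((Real.pi / 2 : ℝ) : ℂ) * Complex.I
      + (r : ℂ) * Complex.exp (((7 * Real.pi / 4 : ℝ) : ℂ) * Complex.I)) ∉ SectorPiDelta := by
  obtain ⟨hx0, hx1⟩ := xfacts r hr
  apply typeB _ (Real.pi / 2 - r * (Real.sqrt 2 / 2)) hx0 hx1
  · rw [point_re, cos_7pi4]; simp; ring
  · left; rw [point_im, sin_7pi4]; simp; ring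

lemma end1a (r : ℝ) (hr : r ∈ Ioo 0 (Real.pi / 2)) :
    (((Real.pi / 2 : ℝ) : ℂ) - ((Real.pi / 2 : ℝ) : ℂ) * Complex.I
      + (r : ℂ) * Complex.exp (((Real.pi / 4 : ℝ) : ℂ) * Complex.I)) ∈ SectorDelta ∧
    (((Real.pi / 2 : ℝ) : ℂ) - ((Real.pi / 2 : ℝ) : ℂ) * Complex.I
      + (r : ℂ) * Complex.exp (((Real.pi / 4 : ℝ) : ℂ) * Complex.I)) ∉ SectorPiDelta := by
  obtain ⟨hx0, hx1⟩ := xfacts r hr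
  apply typeB _ (Real.pi / 2 - r * (Real.sqrt 2 / 2)) hx0 hx1
  · rw [point_re, Real.cos_pi_div_four]; simp; ring
  · right; rw [point_im, Real.sin_pi_div_four]; simp; ring

lemma end1b (r : ℝ) (hr : r ∈ Ioo 0 (Real.pi / 2)) :
    (((Real.pi / 2 : ℝ) : ℂ) - ((Real.pi / 2 : ℝ) : ℂ) * Complex.I
      + (r : ℂ) * Complex.exp (((3 * Real.pi / 4 : ℝ) : ℂ) * Complex.I)) ∈ SectorPiDelta ∧
    (((Real.pi / 2 : ℝ) : ℂ) - ((Real.pi / 2 : ℝ) : ℂ) * Complex.I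
      + (r : ℂ) * Complex.exp (((3 * Real.pi / 4 : ℝ) : ℂ) * Complex.I)) ∉ SectorDelta := by
  obtain ⟨hx0, hx1⟩ := xfacts r hr
  apply typeA _ (Real.pi / 2 - r * (Real.sqrt 2 / 2)) hx0 hx1
  · rw [point_re, cos_3pi4]; simp; ring
  · right; rw [point_im, sin_3pi4]; simp; ring

lemma aux_limsup (χ : ℂ → ℝ) (c : ℂ) (α β : ℝ)
    (hαβ : β = α + Real.pi / 2)
    (hdiff : ∀ r : ℝ, r ∈ Set.Ioo 0 (Real.pi / 2) → ∀ θ ∈ Set.Icc α β,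
        DifferentiableAt ℝ χ (c + (r : ℂ) * Complex.exp ((θ : ℂ) * Complex.I)))
    (hD : ∀ r : ℝ, r ∈ Set.Ioo 0 (Real.pi / 2) → ∀ θ ∈ Set.Ioo α β,
        c + (r : ℂ) * Complex.exp ((θ : ℂ) * Complex.I) ∈ SquareD)
    (hval : ∀ r : ℝ, r ∈ Set.Ioo 0 (Real.pi / 2) →
        |χ (c + (r : ℂ) * Complex.exp ((β : ℂ) * Complex.I)) -
          χ (c + (r : ℂ) * Complex.exp ((α : ℂ) * Complex.I))| = 1) :
    0 < Filter.limsup (fun z => ENNReal.ofReal ‖(z - c) * wirtingerBar χ z‖)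
        (nhdsWithin c SquareD) := by
  have hπ := Real.pi_pos
  by_contra h
  push_neg at h
  have h0 : Filter.limsup (fun z => ENNReal.ofReal ‖(z - c) * wirtingerBar χ z‖)
      (nhdsWithin c SquareD) = 0 := le_antisymm h (zero_le)
  set ε : ℝ := (2 * Real.pi)⁻¹ with hε
  have hεpos : 0 < ε := by positivity
  have hlt : Filter.limsup (fun z => ENNReal.ofReal ‖(z - c) * wirtingerBar χ z‖)
      (nhdsWithin c SquareD) < ENNReal.ofReal ε := by
    rw [h0]; exact ENNReal.ofReal_pos.2 hεpos
  have hev := Filter.eventually_lt_of_limsup_lt hlt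
  rw [eventually_nhdsWithin_iff, Metric.eventually_nhds_iff] at hev
  obtain ⟨δ, hδ, hball⟩ := hev
  set r : ℝ := min (δ / 2) (Real.pi / 4) with hrdef
  have hr : r ∈ Ioo 0 (Real.pi / 2) := by
    constructor
    · exact lt_min (by linarith) (by linarith)
    · exact lt_of_le_of_lt (min_le_right _ _) (by linarith)
  have hrδ : r < δ := lt_of_le_of_lt (min_le_left _ _) (by linarith)
  set γ : ℝ → ℂ := fun θ => c + (r : ℂ) * Complex.exp ((θ : ℂ) * Complex.I) with hγ
  set f : ℝ → ℝ := fun θ => χ (γ θ) with hf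
  set f' : ℝ → ℝ := fun θ =>
    fderiv ℝ χ (γ θ) ((r : ℂ) * (Complex.exp ((θ : ℂ) * Complex.I) * Complex.I)) with hf'
  have hαβ' : α < β := by rw [hαβ]; linarith
  have hγd : ∀ θ : ℝ, HasDerivAt γ ((r : ℂ) * (Complex.exp ((θ : ℂ) * Complex.I) * Complex.I)) θ := by
    intro θ
    have h1 : HasDerivAt (fun θ : ℝ => (θ : ℂ)) 1 θ := by
      simpa using (hasDerivAt_id θ).ofReal_comp
    have h2 : HasDerivAt (fun θ : ℝ => (θ : ℂ) * Complex.I) Complex.I θ := by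
      simpa using h1.mul_const Complex.I
    have h3 : HasDerivAt (fun θ : ℝ => Complex.exp ((θ : ℂ) * Complex.I))
        (Complex.exp ((θ : ℂ) * Complex.I) * Complex.I) θ := h2.cexp
    have h4 := (h3.const_mul ((r : ℂ))).const_add c
    exact h4
  have hfd : ∀ θ ∈ Icc α β, HasDerivAt f (f' θ) θ := by
    intro θ hθ
    exact ((hdiff r hr θ hθ).hasFDerivAt).comp_hasDerivAt θ (hγd θ)
  have hcont : ContinuousOn f (Icc α β) := fun θ hθ => ((hfd θ hθ).continuousAt).continuousWithinAt
  obtain ⟨θc, hθc, hslope⟩ := exists_hasDerivAt_eq_slope f f' hαβ' hcont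
    (fun x hx => hfd x (Ioo_subset_Icc_self hx))
  -- |f' θc| = 2/π
  have habs : |f' θc| = 2 / Real.pi := by
    rw [hslope, abs_div]
    rw [hval r hr]
    rw [abs_of_pos (by linarith : (0:ℝ) < β - α)]
    rw [hαβ]; ring_nf
  -- bound
  have hz : γ θc ∈ SquareD := hD r hr θc hθc
  have hnorm1 : ‖Complex.exp ((θc : ℂ) * Complex.I)‖ = 1 := by
    exact Complex.norm_exp_ofReal_mul_I θc
  have hdist : dist (γ θc) c < δ := by
    have : γ θc - c = (r : ℂ) * Complex.exp ((θc : ℂ) * Complex.I) := by rw [hγ]; ring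
    rw [dist_eq_norm, this, norm_mul, hnorm1, Complex.norm_real, Real.norm_eq_abs,
      abs_of_pos hr.1]
    simpa using hrδ
  have hsmall := hball hdist hz
  have hsmall' : ‖(γ θc - c) * wirtingerBar χ (γ θc)‖ < ε :=
    (ENNReal.ofReal_lt_ofReal_iff hεpos).1 hsmall
  have hfact : ‖(γ θc - c) * wirtingerBar χ (γ θc)‖ = r * ‖wirtingerBar χ (γ θc)‖ := by
    have : γ θc - c = (r : ℂ) * Complex.exp ((θc : ℂ) * Complex.I) := by rw [hγ]; ring
    rw [this, norm_mul, norm_mul, hnorm1, Complex.norm_real, Real.norm_eq_abs,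
      abs_of_pos hr.1, mul_one]
  have hbound : |f' θc| ≤ 2 * (r * ‖wirtingerBar χ (γ θc)‖) := by
    have h1 := abs_fderiv_le χ (γ θc) ((r : ℂ) * (Complex.exp ((θc : ℂ) * Complex.I) * Complex.I))
    have h2 : ‖(r : ℂ) * (Complex.exp ((θc : ℂ) * Complex.I) * Complex.I)‖ = r := by
      rw [norm_mul, norm_mul, hnorm1, Complex.norm_I, Complex.norm_real, Real.norm_eq_abs,
        abs_of_pos hr.1]; ring
    rw [h2] at h1
    calc |f' θc| ≤ 2 * ‖wirtingerBar χ (γ θc)‖ * r := h1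
      _ = 2 * (r * ‖wirtingerBar χ (γ θc)‖) := by ring
  rw [hfact] at hsmall'
  rw [habs] at hbound
  have : 2 / Real.pi < 2 * ε := by linarith
  rw [hε] at this
  rw [div_lt_iff₀ hπ] at this
  have h2π : 2 * (2 * Real.pi)⁻¹ * Real.pi = 1 := by field_simp
  rw [h2π] at this
  linarith

/-- Optimality of the `∂̄`-estimate: for ANY smooth partition of unity `{χ₁, χ₂}` on
`Ω = Δ ∪ (π − Δ)` subordinate to `{Δ, π − Δ}`, one has
`limsup_{z → zᵢ, z ∈ D} |(z − zᵢ) ∂χ₁/∂z̄(z)| > 0` at both vertices `z₀, z₁` of `D`. -/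
theorem dbar_estimate_optimal
    (z₀ z₁ : ℂ) (hz₀ : z₀ = ((Real.pi / 2 : ℝ) : ℂ) + ((Real.pi / 2 : ℝ) : ℂ) * Complex.I)
    (hz₁ : z₁ = ((Real.pi / 2 : ℝ) : ℂ) - ((Real.pi / 2 : ℝ) : ℂ) * Complex.I)
    (χ₁ χ₂ : ℂ → ℝ)
    (hsm₁ : ContDiffOn ℝ (⊤ : ℕ∞) χ₁ (SectorDelta ∪ SectorPiDelta))
    (hsm₂ : ContDiffOn ℝ (⊤ : ℕ∞) χ₂ (SectorDelta ∪ SectorPiDelta))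
    (hb₁ : ∀ z ∈ SectorDelta ∪ SectorPiDelta, 0 ≤ χ₁ z ∧ χ₁ z ≤ 1)
    (hb₂ : ∀ z ∈ SectorDelta ∪ SectorPiDelta, 0 ≤ χ₂ z ∧ χ₂ z ≤ 1)
    (hs₁ : (SectorDelta ∪ SectorPiDelta) ∩ tsupport χ₁ ⊆ SectorDelta)
    (hs₂ : (SectorDelta ∪ SectorPiDelta) ∩ tsupport χ₂ ⊆ SectorPiDelta)
    (hsum : ∀ z ∈ SectorDelta ∪ SectorPiDelta, χ₁ z + χ₂ z = 1) :
    0 < Filter.limsup (fun z => ENNReal.ofReal ‖(z - z₀) * wirtingerBar χ₁ z‖)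
        (nhdsWithin z₀ SquareD) ∧
    0 < Filter.limsup (fun z => ENNReal.ofReal ‖(z - z₁) * wirtingerBar χ₁ z‖)
        (nhdsWithin z₁ SquareD) := by
  have hπ := Real.pi_pos
  have hdiffΩ : ∀ z ∈ SectorDelta ∪ SectorPiDelta, DifferentiableAt ℝ χ₁ z := fun z hz =>
    ((hsm₁ z hz).contDiffAt (isOpen_Omega.mem_nhds hz)).differentiableAt (by simp)
  have hchi0 : ∀ z ∈ SectorDelta ∪ SectorPiDelta, z ∉ SectorDelta → χ₁ z = 0 := by
    intro z hz hz'
    by_contra h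
    exact hz' (hs₁ ⟨hz, subset_tsupport _ h⟩)
  have hchi1 : ∀ z ∈ SectorDelta ∪ SectorPiDelta, z ∉ SectorPiDelta → χ₁ z = 1 := by
    intro z hz hz'
    have h2 : χ₂ z = 0 := by
      by_contra h
      exact hz' (hs₂ ⟨hz, subset_tsupport _ h⟩)
    have h3 := hsum z hz
    linarith
  constructor
  · rw [hz₀]
    apply aux_limsup χ₁ _ (5 * Real.pi / 4) (7 * Real.pi / 4) (by ring)
    · intro r hr θ hθ
      apply hdiffΩ
      rcases eq_or_lt_of_le hθ.1 with h | h
      · rw [← h]; exact Or.inr (end0a r hr).1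
      rcases eq_or_lt_of_le hθ.2 with h2 | h2
      · rw [h2]; exact Or.inl (end0b r hr).1
      · exact Or.inl (memD0 r θ hr ⟨h, h2⟩).1
    · intro r hr θ hθ; exact memD0 r θ hr hθ
    · intro r hr
      have hA := end0a r hr
      have hB := end0b r hr
      rw [hchi1 _ (Or.inl hB.1) hB.2, hchi0 _ (Or.inr hA.1) hA.2]
      norm_num
  · rw [hz₁]
    apply aux_limsup χ₁ _ (Real.pi / 4) (3 * Real.pi / 4) (by ring)
    · intro r hr θ hθ
      apply hdiffΩ
      rcases eq_or_lt_of_le hθ.1 with h | h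
      · rw [← h]; exact Or.inl (end1a r hr).1
      rcases eq_or_lt_of_le hθ.2 with h2 | h2
      · rw [h2]; exact Or.inr (end1b r hr).1
      · exact Or.inl (memD1 r θ hr ⟨h, h2⟩).1
    · intro r hr θ hθ; exact memD1 r θ hr hθ
    · intro r hr
      have hA := end1a r hr
      have hB := end1b r hr
      rw [hchi1 _ (Or.inl hA.1) hA.2, hchi0 _ (Or.inr hB.1) hB.2]
      norm_num

end
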